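/- Let n, h, k be integers with k > h ≥ 0 and n ≡ h (mod 2). Then the total number of k-down steps, summed over all generalized Dyck paths from (0,0) to (n,h), equals C(n, (n−h)/2 + k) − C(n, (n+h)/2 + k + 1). -/

import Mathlib

open Finset

attribute [local instance] Classical.propDecidable

/-- The height of the lattice path `p` (where `true` is a northeast step `(1,1)` and
`false` is a southeast step `(1,-1)`) after its first `i` steps. -/
def pathHeight {n : ℕ} (p : Fin n → Bool) (i : ℕ) : ℤ :=
  ∑ j ∈ Finset.univ.filter (fun j : Fin n => (j : ℕ) < i), (if p j then (1 : ℤ) else -1)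

/-- `p` is a generalized Dyck path from `(0,0)` to `(n,h)`: it ends at height `h`
and never goes below the x-axis. -/
def IsGDPath {n : ℕ} (h : ℤ) (p : Fin n → Bool) : Prop :=
  pathHeight p n = h ∧ ∀ i ≤ n, 0 ≤ pathHeight p i

/-- The set of generalized Dyck paths from `(0,0)` to `(n,h)`. -/
noncomputable def gdPaths (n : ℕ) (h : ℤ) : Finset (Fin n → Bool) :=
  Finset.univ.filter (IsGDPath h)

/-- The number of `k`-down steps of `p`, i.e. southeast steps from height `k` to `k-1`. -/
noncomputable def downSteps {n : ℕ} (k : ℤ) (p : Fin n → Bool) : ℕ :=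
  (Finset.univ.filter (fun i : Fin n => p i = false ∧ pathHeight p (i : ℕ) = k)).card

/-- Binomial coefficient on integers, `0` unless `0 ≤ b ≤ a`. -/
def binom (a b : ℤ) : ℤ :=
  if 0 ≤ b ∧ b ≤ a then (a.toNat.choose b.toNat : ℤ) else 0

/-!
Split a path by its last step: a generalized Dyck path to `(n+1, h)` with `h ≥ 0` is a path
to `(n, h-1)` followed by an up step, or a path to `(n, h+1)` followed by a down step, and the
latter step is a new `k`-down step exactly when `h + 1 = k`. Writing `h = 2m - n`, so that `m` is
the number of up steps, the number of paths is the ballot number `C(n,m) - C(n,m+1)` and the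
total number of `k`-down steps is `C(n, max(n-m+k, m+1)) - C(n, m+k+1)` for every `h ≥ -1`:
both sides satisfy the same recurrence by Pascal's rule.
-/

lemma binom_natCast (n j : ℕ) : binom n j = n.choose j := by
  unfold binom
  split_ifs with hj
  · simp
  · rw [Nat.choose_eq_zero_of_lt (by omega), Nat.cast_zero]

lemma binom_of_neg (a : ℤ) {b : ℤ} (hb : b < 0) : binom a b = 0 :=
  if_neg (by omega)

lemma binom_of_lt {a b : ℤ} (hab : a < b) : binom a b = 0 :=
  if_neg (by omega)

lemma binom_succ (n : ℕ) (b : ℤ) : binom (n + 1 : ℕ) b = binom n b + binom n (b - 1) := by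
  rcases lt_or_ge b 0 with hb | hb
  · rw [binom_of_neg _ hb, binom_of_neg _ hb, binom_of_neg _ (by omega), add_zero]
  lift b to ℕ using hb
  cases b with
  | zero =>
    simp [binom]
    positivity
  | succ j =>
    rw [show ((j + 1 : ℕ) : ℤ) - 1 = j by omega, binom_natCast, binom_natCast,
      binom_natCast, Nat.choose_succ_succ']
    push_cast
    ring

lemma binom_symm (n : ℕ) (b : ℤ) : binom n (n - b) = binom n b := by
  rcases lt_or_ge b 0 with hb | hb
  · rw [binom_of_lt (by omega), binom_of_neg _ hb]
  rcases lt_or_ge (n : ℤ) b with hnb | hbn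
  · rw [binom_of_neg _ (by omega), binom_of_lt hnb]
  lift b to ℕ using hb
  rw [show (n : ℤ) - b = ((n - b : ℕ) : ℤ) by omega, binom_natCast, binom_natCast,
    Nat.choose_symm (by omega)]

/-- The last summand counts the paths to `(n, 2m - n)`, whose appended down step is a `k`-down
step exactly when `2m - n = k`. -/
lemma binom_max_succ (n k : ℕ) (m : ℤ) :
    binom (n + 1 : ℕ) (max ((n + 1 : ℕ) - m + k) (m + 1)) - binom (n + 1 : ℕ) (m + k + 1) =
      (binom n (max (n - (m - 1) + k) (m - 1 + 1)) - binom n (m - 1 + k + 1)) +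
      (binom n (max (n - m + k) (m + 1)) - binom n (m + k + 1)) +
      if 2 * m - n = k then binom n m - binom n (m + 1) else 0 := by
  rw [binom_succ, binom_succ, show m + k + 1 - 1 = m - 1 + k + 1 by ring, sub_add_cancel,
    Nat.cast_succ]
  rcases lt_trichotomy (2 * m - n) k with hlt | heq | hgt
  · rw [if_neg hlt.ne, max_eq_left (by omega), max_eq_left (by omega), max_eq_left (by omega),
      show (n : ℤ) + 1 - m + k - 1 = n - m + k by ring,
      show (n : ℤ) - (m - 1) + k = n + 1 - m + k by ring]
    ring
  · rw [if_pos heq, max_eq_right (by omega), max_eq_left (by omega), max_eq_right (by omega),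
      show m + 1 - 1 = m by ring, show (n : ℤ) - (m - 1) + k = m + 1 by omega]
    ring
  · rw [if_neg hgt.ne', max_eq_right (by omega), max_eq_right (by omega), max_eq_right (by omega),
      show m + 1 - 1 = m by ring]
    ring

section Paths

variable {n : ℕ}

lemma pathHeight_snoc (q : Fin n → Bool) (b : Bool) (i : ℕ) :
    pathHeight (Fin.snoc q b : Fin (n + 1) → Bool) i =
      pathHeight q i + if n < i then (if b then 1 else -1) else 0 := by
  simp only [pathHeight, Finset.sum_filter, Fin.sum_univ_castSucc, Fin.snoc_castSucc,
    Fin.snoc_last, Fin.val_castSucc, Fin.val_last]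

lemma pathHeight_snoc_of_le (q : Fin n → Bool) (b : Bool) {i : ℕ} (hi : i ≤ n) :
    pathHeight (Fin.snoc q b : Fin (n + 1) → Bool) i = pathHeight q i := by
  rw [pathHeight_snoc, if_neg hi.not_gt, add_zero]

lemma pathHeight_of_le {p : Fin n → Bool} {i : ℕ} (hi : n ≤ i) :
    pathHeight p i = pathHeight p n := by
  simp only [pathHeight]
  congr 1
  exact Finset.filter_congr fun j _ => iff_of_true (j.isLt.trans_le hi) j.isLt

lemma pathHeight_snoc_succ (q : Fin n → Bool) (b : Bool) :
    pathHeight (Fin.snoc q b : Fin (n + 1) → Bool) (n + 1) =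
      pathHeight q n + if b then 1 else -1 := by
  rw [pathHeight_snoc, if_pos n.lt_succ_self, pathHeight_of_le n.le_succ]

lemma isGDPath_snoc_iff {h : ℤ} (h0 : 0 ≤ h) (q : Fin n → Bool) (b : Bool) :
    IsGDPath h (Fin.snoc q b : Fin (n + 1) → Bool) ↔ IsGDPath (h - if b then 1 else -1) q := by
  simp only [IsGDPath, pathHeight_snoc_succ]
  constructor
  · rintro ⟨hend, hnonneg⟩
    refine ⟨by omega, fun i hi => ?_⟩
    rw [← pathHeight_snoc_of_le q b hi]
    exact hnonneg i (by omega)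
  · rintro ⟨hend, hnonneg⟩
    refine ⟨by omega, fun i hi => ?_⟩
    rcases hi.lt_or_eq with hi | rfl
    · rw [pathHeight_snoc_of_le q b (by omega)]
      exact hnonneg i (by omega)
    · rw [pathHeight_snoc_succ]
      omega

lemma downSteps_snoc (k : ℤ) (q : Fin n → Bool) (b : Bool) :
    downSteps k (Fin.snoc q b : Fin (n + 1) → Bool) =
      downSteps k q + if b = false ∧ pathHeight q n = k then 1 else 0 := by
  simp only [downSteps, Finset.card_filter, Fin.sum_univ_castSucc, Fin.snoc_castSucc,
    Fin.snoc_last, Fin.val_castSucc, Fin.val_last,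
    pathHeight_snoc_of_le q b (Fin.is_le _)]

lemma sum_gdPaths_succ {M : Type*} [AddCommMonoid M] {h : ℤ} (h0 : 0 ≤ h)
    (f : (Fin (n + 1) → Bool) → M) :
    ∑ p ∈ gdPaths (n + 1) h, f p =
      ∑ q ∈ gdPaths n (h - 1), f (Fin.snoc q true) +
        ∑ q ∈ gdPaths n (h + 1), f (Fin.snoc q false) := by
  simp only [gdPaths, Finset.sum_filter]
  rw [← (Fin.snocEquiv fun _ => Bool).sum_comp, Fintype.sum_prod_type, Fintype.sum_bool]
  have snocEquiv_eq (b : Bool) (q : Fin n → Bool) :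
      (Fin.snocEquiv fun _ => Bool) (b, q) = Fin.snoc q b := rfl
  simp only [snocEquiv_eq, isGDPath_snoc_iff h0, if_true, Bool.false_eq_true, if_false,
    sub_neg_eq_add]

lemma card_gdPaths_succ {h : ℤ} (h0 : 0 ≤ h) :
    (gdPaths (n + 1) h).card = (gdPaths n (h - 1)).card + (gdPaths n (h + 1)).card := by
  simpa only [Finset.card_eq_sum_ones] using sum_gdPaths_succ h0 fun _ => 1

lemma sum_downSteps_gdPaths_succ (k : ℤ) {h : ℤ} (h0 : 0 ≤ h) :
    ∑ p ∈ gdPaths (n + 1) h, downSteps k p =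
      ∑ q ∈ gdPaths n (h - 1), downSteps k q + ∑ q ∈ gdPaths n (h + 1), downSteps k q +
        if h + 1 = k then (gdPaths n (h + 1)).card else 0 := by
  rw [sum_gdPaths_succ h0, add_assoc]
  congr 1
  · simp [downSteps_snoc]
  · calc
      _ = ∑ q ∈ gdPaths n (h + 1), (downSteps k q + if h + 1 = k then 1 else 0) :=
        Finset.sum_congr rfl fun q hq => by
          rw [downSteps_snoc, (Finset.mem_filter.mp hq).2.1]
          simp
      _ = _ := by
        rw [Finset.sum_add_distrib]
        split_ifs <;> simp

lemma gdPaths_of_neg {h : ℤ} (hh : h < 0) : gdPaths n h = ∅ :=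
  Finset.filter_eq_empty_iff.mpr fun _ _ hp => (hp.2 n le_rfl).not_gt (hp.1 ▸ hh)

lemma card_gdPaths_zero (h : ℤ) : (gdPaths 0 h).card = if h = 0 then 1 else 0 := by
  have height_eq_zero (p : Fin 0 → Bool) (i : ℕ) : pathHeight p i = 0 := by simp [pathHeight]
  simp [gdPaths, Finset.univ_unique, Finset.filter_singleton, IsGDPath, height_eq_zero, eq_comm,
    apply_ite Finset.card]

lemma downSteps_fin_zero (k : ℤ) (p : Fin 0 → Bool) : downSteps k p = 0 := by
  simp [downSteps]

end Paths

theorem card_gdPaths (n : ℕ) (m : ℤ) (hm : n ≤ 2 * m + 1) :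
    ((gdPaths n (2 * m - n)).card : ℤ) = binom n m - binom n (m + 1) := by
  induction n generalizing m with
  | zero =>
    rw [card_gdPaths_zero]
    rcases (show m = 0 ∨ 0 < m by omega) with rfl | hm0
    · simp [binom]
    · rw [if_neg (by omega), binom_of_lt (by omega), binom_of_lt (by omega)]
      simp
  | succ n ih =>
    rcases (show 2 * m = n ∨ n < 2 * m by omega) with hmn | hmn
    · rw [gdPaths_of_neg (by omega), ← binom_symm (n + 1) (m + 1),
        show ((n + 1 : ℕ) : ℤ) - (m + 1) = m by omega]
      simp
    · rw [card_gdPaths_succ (by omega), Nat.cast_add,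
        show 2 * m - ((n + 1 : ℕ) : ℤ) - 1 = 2 * (m - 1) - n by push_cast; ring,
        show 2 * m - ((n + 1 : ℕ) : ℤ) + 1 = 2 * m - n by push_cast; ring,
        ih (m - 1) (by omega), ih m (by omega), binom_succ, binom_succ, sub_add_cancel,
        add_sub_cancel_right]
      ring

theorem sum_downSteps_gdPaths (n k : ℕ) (m : ℤ) (hm : n ≤ 2 * m + 1) :
    ((∑ p ∈ gdPaths n (2 * m - n), downSteps (k : ℤ) p : ℕ) : ℤ) =
      binom n (max (n - m + k) (m + 1)) - binom n (m + k + 1) := by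
  induction n generalizing m with
  | zero =>
    simp only [downSteps_fin_zero, Finset.sum_const_zero, Nat.cast_zero]
    rw [binom_of_lt (by omega), binom_of_lt (by omega), sub_zero]
  | succ n ih =>
    rcases (show 2 * m = n ∨ n < 2 * m by omega) with hmn | hmn
    · rw [gdPaths_of_neg (by omega), max_eq_left (by omega),
        show ((n + 1 : ℕ) : ℤ) - m + k = m + k + 1 by omega]
      simp
    · rw [sum_downSteps_gdPaths_succ _ (by omega),
        show 2 * m - ((n + 1 : ℕ) : ℤ) - 1 = 2 * (m - 1) - n by push_cast; ring,
        show 2 * m - ((n + 1 : ℕ) : ℤ) + 1 = 2 * m - n by push_cast; ring,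
        Nat.cast_add, Nat.cast_add, ih (m - 1) (by omega), ih m (by omega),
        Nat.cast_ite, card_gdPaths n m (by omega), Nat.cast_zero]
      exact (binom_max_succ n k m).symm

/-- For k > h ≥ 0, the total number of k-down steps over all generalized Dyck paths from
(0,0) to (n,h) equals C(n, (n−h)/2 + k) − C(n, (n+h)/2 + k + 1). -/
theorem stmt4 (n h k : ℕ) (hhk : h < k) (hmod : n % 2 = h % 2) :
    ((∑ p ∈ gdPaths n (h : ℤ), downSteps (k : ℤ) p : ℕ) : ℤ) =
      binom n (((n : ℤ) - h) / 2 + k) - binom n (((n : ℤ) + h) / 2 + k + 1) := by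
  obtain ⟨m, hm⟩ : ∃ m : ℤ, m = ((n : ℤ) + h) / 2 := ⟨_, rfl⟩
  have key := sum_downSteps_gdPaths n k m (by omega)
  rwa [show 2 * m - n = h by omega, max_eq_left (by omega),
    show (n : ℤ) - m = (n - h) / 2 by omega, hm] at key
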